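/- Let n, d, r be positive integers and C > 0. Let M = UΣVᵀ be a rank-r matrix in ℝ^{n×n} satisfying assumptions A1 and A2 (with parameter δ_d), and let Ω be generated by a d-regular bipartite graph whose biadjacency matrix G satisfies G1 and G2 with constant C. Then for every matrix Z in the subspace T, ‖(n/d)·P_T(P_Ω(Z)) − Z‖_F ≤ √(2·(δ_d² + C²μ₀²r²/d))·‖Z‖_F. -/

import Mathlib

open Matrix
open scoped BigOperators

noncomputable section

/-- Euclidean norm of a vector. -/
def vecNorm {β : Type*} [Fintype β] (x : β → ℝ) : ℝ :=
  Real.sqrt (∑ i, x i ^ 2)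

/-- Spectral norm (largest singular value) of a real matrix. -/
def specNorm {α β : Type*} [Fintype α] [Fintype β] (A : Matrix α β ℝ) : ℝ :=
  sSup {c | ∃ x : β → ℝ, vecNorm x ≤ 1 ∧ c = vecNorm (A.mulVec x)}

/-- Second largest singular value of a real matrix (Courant–Fischer characterization). -/
def sigma2 {α β : Type*} [Fintype α] [Fintype β] (A : Matrix α β ℝ) : ℝ :=
  ⨅ v : β → ℝ, sSup {c | ∃ x : β → ℝ,
    vecNorm x ≤ 1 ∧ (∑ i, v i * x i) = 0 ∧ c = vecNorm (A.mulVec x)}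

/-- Frobenius norm. -/
def frobNorm {α β : Type*} [Fintype α] [Fintype β] (A : Matrix α β ℝ) : ℝ :=
  Real.sqrt (∑ i, ∑ j, A i j ^ 2)

/-- Nuclear norm: the sum of the singular values, i.e. the trace of `√(AᵀA)`. -/
def nuclearNorm {α β : Type*} [Fintype α] [Fintype β] [DecidableEq β]
    (A : Matrix α β ℝ) : ℝ :=
  (((Matrix.posSemidef_conjTranspose_mul_self A).1.eigenvectorUnitary : Matrix β β ℝ) *
    Matrix.diagonal ((RCLike.ofReal : ℝ → ℝ) ∘ (Real.sqrt ·) ∘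
      (Matrix.posSemidef_conjTranspose_mul_self A).1.eigenvalues) *
    (star (Matrix.posSemidef_conjTranspose_mul_self A).1.eigenvectorUnitary :
      Matrix β β ℝ)).trace

/-- The sampling operator `P_Ω`. -/
def sampl {n : ℕ} (Ω : Finset (Fin n × Fin n)) (M : Matrix (Fin n) (Fin n) ℝ) :
    Matrix (Fin n) (Fin n) ℝ :=
  Matrix.of fun i j => if (i, j) ∈ Ω then M i j else 0

/-- The biadjacency matrix `G` of the bipartite graph with edge set `Ω`. -/
def biadj {n : ℕ} (Ω : Finset (Fin n × Fin n)) : Matrix (Fin n) (Fin n) ℝ :=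
  Matrix.of fun i j => if (i, j) ∈ Ω then (1 : ℝ) else 0

/-- `Ω` is the edge set of a `d`-regular bipartite graph: every row and every column
of `G` has exactly `d` ones. -/
def RegularSampling {n : ℕ} (Ω : Finset (Fin n × Fin n)) (d : ℕ) : Prop :=
  (∀ i : Fin n, (Finset.univ.filter fun j => (i, j) ∈ Ω).card = d) ∧
  (∀ j : Fin n, (Finset.univ.filter fun i => (i, j) ∈ Ω).card = d)

/-- Assumption G1: the all-ones vector is a top left- and right-singular vector of `G`,
with `σ₁(G) = d`. -/
def AssumptionG1 {n : ℕ} (Ω : Finset (Fin n × Fin n)) (d : ℕ) : Prop :=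
  specNorm (biadj Ω) = d ∧
  (biadj Ω).mulVec (fun _ => 1) = (fun _ => (d : ℝ)) ∧
  Matrix.vecMul (fun _ => 1) (biadj Ω) = (fun _ => (d : ℝ))

/-- Assumption G2: `σ₂(G) ≤ C·√d`. -/
def AssumptionG2 {n : ℕ} (Ω : Finset (Fin n × Fin n)) (d : ℕ) (C : ℝ) : Prop :=
  sigma2 (biadj Ω) ≤ C * Real.sqrt d

/-- Assumption A1 (`μ₀`-incoherence) for one factor: every row `U^i` satisfies
`‖U^i‖² ≤ μ₀ r / n`. -/
def IncoherentRows {n r : ℕ} (U : Matrix (Fin n) (Fin r) ℝ) (μ₀ : ℝ) : Prop :=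
  ∀ i : Fin n, (∑ k, U i k ^ 2) ≤ μ₀ * r / n

/-- Assumption A2 (strong incoherence with parameter `δ`) for one factor:
for every `S` with `|S| = d`, `‖(n/d)·∑_{k∈S} U^k (U^k)ᵀ − I‖ ≤ δ`. -/
def StrongIncoherence {n r : ℕ} (U : Matrix (Fin n) (Fin r) ℝ) (d : ℕ) (δ : ℝ) : Prop :=
  ∀ S : Finset (Fin n), S.card = d →
    specNorm (((n : ℝ) / (d : ℝ)) • (∑ k ∈ S, Matrix.vecMulVec (U k) (U k)) - 1) ≤ δ

/-- `M = U · diagonal s · Vᵀ` is a thin SVD of the rank-`r` matrix `M`. -/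
def IsThinSVD {n r : ℕ} (M : Matrix (Fin n) (Fin n) ℝ)
    (U : Matrix (Fin n) (Fin r) ℝ) (s : Fin r → ℝ) (V : Matrix (Fin n) (Fin r) ℝ) : Prop :=
  Uᵀ * U = 1 ∧ Vᵀ * V = 1 ∧ (∀ i, 0 < s i) ∧ M = U * Matrix.diagonal s * Vᵀ

/-- The projection `P_T` onto the subspace `T` spanned by matrices `UXᵀ` and `YVᵀ`. -/
def projT {n r : ℕ} (U V : Matrix (Fin n) (Fin r) ℝ) (Z : Matrix (Fin n) (Fin n) ℝ) :
    Matrix (Fin n) (Fin n) ℝ :=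
  U * Uᵀ * Z + Z * (V * Vᵀ) - U * Uᵀ * Z * (V * Vᵀ)

/-- The projection `P_{T⊥}` onto the orthogonal complement of `T`. -/
def projTperp {n r : ℕ} (U V : Matrix (Fin n) (Fin r) ℝ) (Z : Matrix (Fin n) (Fin n) ℝ) :
    Matrix (Fin n) (Fin n) ℝ :=
  (1 - U * Uᵀ) * Z * (1 - V * Vᵀ)

end

/-!
Write `W = (n/d) P_Ω(Z) - Z`. As `Z ∈ T`, the error is `P_T W`, and `‖P_T W‖² ≤ ‖UᵀW‖² + ‖WV‖²`;
transposing everything swaps `U` with `V` and `G` with `Gᵀ`, so it suffices to bound `‖UᵀW‖`.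
Split `Z = UA + B` with `A = UᵀZ`, so that `UᵀB = 0`, and `Z ∈ T` forces `B = (BV)Vᵀ`. Column `j`
of the `UA` contribution is `((n/d) ∑_{i ∈ S_j} U^i U^iᵀ - I) A_j` with `|S_j| = d`, of norm at
most `δ ‖A_j‖` by A2. The `B` contribution `Uᵀ P_Ω(B)` is a combination of forms `xᵀ G y` whose
vectors `x` sum to zero because `UᵀB = 0`; since `𝟙` is a common singular vector of `G` (G1), the
Courant–Fischer description of `σ₂` bounds `G` on `𝟙^⊥` by `σ₂(G) ≤ C√d` (G2), and A1 turns the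
sum of these forms into `(μ₀ r/n) C√d ‖B‖`. Pythagoras `‖Z‖² = ‖A‖² + ‖B‖²` and Cauchy–Schwarz
combine the two bounds.
-/

section Norms

variable {α β : Type*} [Fintype α] [Fintype β]

lemma vecNorm_nonneg (x : β → ℝ) : 0 ≤ vecNorm x := Real.sqrt_nonneg _

lemma vecNorm_sq (x : β → ℝ) : vecNorm x ^ 2 = ∑ i, x i ^ 2 :=
  Real.sq_sqrt (by positivity)

lemma vecNorm_sq_eq_dotProduct (x : β → ℝ) : vecNorm x ^ 2 = x ⬝ᵥ x := by
  rw [vecNorm_sq]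
  simp only [dotProduct, sq]

lemma vecNorm_smul (c : ℝ) (x : β → ℝ) : vecNorm (c • x) = |c| * vecNorm x := by
  simp only [vecNorm, Pi.smul_apply, smul_eq_mul, mul_pow, ← Finset.mul_sum]
  rw [Real.sqrt_mul (sq_nonneg c), Real.sqrt_sq_eq_abs]

lemma dotProduct_le_vecNorm_mul (x y : β → ℝ) : x ⬝ᵥ y ≤ vecNorm x * vecNorm y :=
  Real.sum_mul_le_sqrt_mul_sqrt _ x y

lemma frobNorm_nonneg (A : Matrix α β ℝ) : 0 ≤ frobNorm A := Real.sqrt_nonneg _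

lemma frobNorm_sq (A : Matrix α β ℝ) : frobNorm A ^ 2 = ∑ i, ∑ j, A i j ^ 2 :=
  Real.sq_sqrt (by positivity)

lemma frobNorm_sq_eq_sum (A : Matrix α β ℝ) : frobNorm A ^ 2 = ∑ i, vecNorm (A i) ^ 2 := by
  simp only [frobNorm_sq, vecNorm_sq]

lemma frobNorm_sq_le_of_vecNorm_le {γ : Type*} [Fintype γ] {D : Matrix α β ℝ}
    {A : Matrix α γ ℝ} {δ : ℝ} (h : ∀ i, vecNorm (D i) ≤ δ * vecNorm (A i)) :
    frobNorm D ^ 2 ≤ δ ^ 2 * frobNorm A ^ 2 := by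
  rw [frobNorm_sq_eq_sum, frobNorm_sq_eq_sum, Finset.mul_sum]
  gcongr with i
  rw [← mul_pow]
  exact pow_le_pow_left₀ (vecNorm_nonneg _) (h i) 2

lemma vecNorm_mulVec_le_frobNorm (A : Matrix α β ℝ) (x : β → ℝ) :
    vecNorm (A *ᵥ x) ≤ frobNorm A * vecNorm x := by
  refine (sq_le_sq₀ (vecNorm_nonneg _) (by positivity [frobNorm_nonneg A, vecNorm_nonneg x])).1 ?_
  rw [mul_pow, frobNorm_sq_eq_sum, Finset.sum_mul, vecNorm_sq]
  refine Finset.sum_le_sum fun i _ => ?_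
  rw [vecNorm_sq, vecNorm_sq]
  exact Finset.sum_mul_sq_le_sq_mul_sq _ _ _

lemma specNorm_set_bddAbove (A : Matrix α β ℝ) :
    BddAbove {c | ∃ x : β → ℝ, vecNorm x ≤ 1 ∧ c = vecNorm (A *ᵥ x)} := by
  refine ⟨frobNorm A, ?_⟩
  rintro _ ⟨x, hx, rfl⟩
  exact (vecNorm_mulVec_le_frobNorm A x).trans (mul_le_of_le_one_right (frobNorm_nonneg A) hx)

lemma vecNorm_mulVec_le_specNorm (A : Matrix α β ℝ) (x : β → ℝ) :
    vecNorm (A *ᵥ x) ≤ specNorm A * vecNorm x := by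
  rcases (vecNorm_nonneg x).eq_or_lt with hx | hx
  · simpa [← hx] using vecNorm_mulVec_le_frobNorm A x
  · have hunit : vecNorm ((vecNorm x)⁻¹ • x) = 1 := by
      rw [vecNorm_smul, abs_of_pos (inv_pos.2 hx), inv_mul_cancel₀ hx.ne']
    have := le_csSup (specNorm_set_bddAbove A) ⟨_, hunit.le, rfl⟩
    rwa [mulVec_smul, vecNorm_smul, abs_of_pos (inv_pos.2 hx), inv_mul_le_iff₀ hx,
      mul_comm] at this

attribute [local instance] Matrix.frobeniusNormedAddCommGroup Matrix.frobeniusNormedSpace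

lemma frobNorm_eq_norm (A : Matrix α β ℝ) : frobNorm A = ‖A‖ := by
  simp only [frobNorm, Matrix.frobenius_norm_def, Real.sqrt_eq_rpow, Real.rpow_two,
    Real.norm_eq_abs, sq_abs]

lemma frobNorm_transpose (A : Matrix α β ℝ) : frobNorm Aᵀ = frobNorm A := by
  simp only [frobNorm_eq_norm, Matrix.frobenius_norm_transpose]

lemma frobNorm_add_le (A B : Matrix α β ℝ) : frobNorm (A + B) ≤ frobNorm A + frobNorm B := by
  simp only [frobNorm_eq_norm, norm_add_le]

lemma frobNorm_smul (c : ℝ) (A : Matrix α β ℝ) : frobNorm (c • A) = |c| * frobNorm A := by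
  simp only [frobNorm_eq_norm, norm_smul, Real.norm_eq_abs]

lemma frobNorm_sq_eq_trace (A : Matrix α β ℝ) : frobNorm A ^ 2 = (Aᵀ * A).trace := by
  rw [frobNorm_sq]
  simp only [trace, diag, mul_apply, transpose_apply, sq]
  rw [Finset.sum_comm]

end Norms

section Orthonormal

variable {m k l : Type*} [Fintype m] [Fintype k] [DecidableEq k]

lemma transpose_mul_sub_mul_transpose_mul_eq_zero {U : Matrix m k ℝ} (hU : Uᵀ * U = 1)
    (Y : Matrix m l ℝ) : Uᵀ * (Y - U * (Uᵀ * Y)) = 0 := by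
  rw [Matrix.mul_sub, ← Matrix.mul_assoc Uᵀ U, hU, Matrix.one_mul, sub_self]

variable [Fintype l]

lemma frobNorm_sq_add (X Y : Matrix m l ℝ) :
    frobNorm (X + Y) ^ 2 = frobNorm X ^ 2 + frobNorm Y ^ 2 + 2 * (Xᵀ * Y).trace := by
  have hsymm : (Yᵀ * X).trace = (Xᵀ * Y).trace := by
    rw [← trace_transpose, transpose_mul, transpose_transpose]
  rw [frobNorm_sq_eq_trace, frobNorm_sq_eq_trace, frobNorm_sq_eq_trace, transpose_add]
  simp only [Matrix.add_mul, Matrix.mul_add, trace_add, hsymm]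
  ring

lemma frobNorm_mul_of_orthonormal {U : Matrix m k ℝ} (hU : Uᵀ * U = 1) (X : Matrix k l ℝ) :
    frobNorm (U * X) = frobNorm X := by
  rw [← sq_eq_sq₀ (frobNorm_nonneg _) (frobNorm_nonneg _), frobNorm_sq_eq_trace,
    frobNorm_sq_eq_trace, transpose_mul, Matrix.mul_assoc, ← Matrix.mul_assoc Uᵀ, hU,
    Matrix.one_mul]

lemma frobNorm_mul_transpose_of_orthonormal {V : Matrix m k ℝ} (hV : Vᵀ * V = 1)
    (X : Matrix l k ℝ) : frobNorm (X * Vᵀ) = frobNorm X := by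
  rw [← frobNorm_transpose, transpose_mul, transpose_transpose,
    frobNorm_mul_of_orthonormal hV, frobNorm_transpose]

lemma frobNorm_sq_eq_add_of_orthonormal {U : Matrix m k ℝ} (hU : Uᵀ * U = 1)
    (Y : Matrix m l ℝ) :
    frobNorm Y ^ 2 = frobNorm (Uᵀ * Y) ^ 2 + frobNorm (Y - U * (Uᵀ * Y)) ^ 2 := by
  conv_lhs => rw [← add_sub_cancel (U * (Uᵀ * Y)) Y]
  rw [frobNorm_sq_add, frobNorm_mul_of_orthonormal hU, transpose_mul, Matrix.mul_assoc,
    transpose_mul_sub_mul_transpose_mul_eq_zero hU, Matrix.mul_zero, trace_zero, mul_zero, add_zero]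

end Orthonormal

section TangentSpace

variable {n r : ℕ} {U V : Matrix (Fin n) (Fin r) ℝ}

lemma projT_transpose (Z : Matrix (Fin n) (Fin n) ℝ) : projT V U Zᵀ = (projT U V Z)ᵀ := by
  simp only [projT, transpose_sub, transpose_add, transpose_mul, transpose_transpose,
    Matrix.mul_assoc]
  abel

lemma projT_smul_sub (c : ℝ) (X Z : Matrix (Fin n) (Fin n) ℝ) :
    projT U V (c • X - Z) = c • projT U V X - projT U V Z := by
  simp only [projT, Matrix.mul_sub, Matrix.sub_mul, Matrix.mul_smul, Matrix.smul_mul, smul_sub,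
    smul_add]
  abel

lemma frobNorm_sq_projT_le (hU : Uᵀ * U = 1) (hV : Vᵀ * V = 1)
    (W : Matrix (Fin n) (Fin n) ℝ) :
    frobNorm (projT U V W) ^ 2 ≤ frobNorm (Uᵀ * W) ^ 2 + frobNorm (W * V) ^ 2 := by
  have hUP : Uᵀ * projT U V W = Uᵀ * W := by
    simp only [projT, Matrix.mul_add, Matrix.mul_sub, ← Matrix.mul_assoc, hU, Matrix.one_mul]
    abel
  have hres : projT U V W - U * (Uᵀ * W) = (W * V - U * (Uᵀ * (W * V))) * Vᵀ := by
    simp only [projT, Matrix.sub_mul, Matrix.mul_assoc]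
    abel
  rw [frobNorm_sq_eq_add_of_orthonormal hU, hUP, hres, frobNorm_mul_transpose_of_orthonormal hV,
    frobNorm_sq_eq_add_of_orthonormal hU (W * V)]
  linarith [sq_nonneg (frobNorm (Uᵀ * (W * V)))]

end TangentSpace

section SpectralGap

variable {α β : Type*} [Fintype α] [Fintype β]

lemma vecNorm_sq_smul_add_smul {x y : β → ℝ} (hxy : x ⬝ᵥ y = 0) (a b : ℝ) :
    vecNorm (a • x + b • y) ^ 2 = a ^ 2 * vecNorm x ^ 2 + b ^ 2 * vecNorm y ^ 2 := by
  simp only [vecNorm_sq_eq_dotProduct, add_dotProduct, dotProduct_add, smul_dotProduct,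
    dotProduct_smul, smul_eq_mul, dotProduct_comm y x, hxy]
  ring

lemma sigma2_set_bddAbove (A : Matrix α β ℝ) (v : β → ℝ) :
    BddAbove {c | ∃ x : β → ℝ,
      vecNorm x ≤ 1 ∧ (∑ i, v i * x i) = 0 ∧ c = vecNorm (A *ᵥ x)} :=
  (specNorm_set_bddAbove A).mono <| by
    rintro _ ⟨x, hx, -, rfl⟩
    exact ⟨x, hx, rfl⟩

lemma vecNorm_mulVec_le_sigma2 (A : Matrix α β ℝ) {e u : β → ℝ} (he : vecNorm e = 1)
    (hu : vecNorm u = 1) (heu : e ⬝ᵥ u = 0) (hAeu : (A *ᵥ e) ⬝ᵥ (A *ᵥ u) = 0)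
    (hle : vecNorm (A *ᵥ u) ≤ vecNorm (A *ᵥ e)) : vecNorm (A *ᵥ u) ≤ sigma2 A := by
  -- For every `v`, some unit vector `z` in `span {e, u}` is orthogonal to `v`, and
  -- `‖Az‖ ≥ ‖Au‖` because `Ae ⊥ Au` and `‖Ae‖ ≥ ‖Au‖`.
  refine le_ciInf fun v => ?_
  obtain ⟨a, b, hab, hv⟩ :
      ∃ a b : ℝ, a ^ 2 + b ^ 2 = 1 ∧ v ⬝ᵥ (a • e + b • u) = 0 := by
    simp only [dotProduct_add, dotProduct_smul, smul_eq_mul]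
    by_cases h : (v ⬝ᵥ e) ^ 2 + (v ⬝ᵥ u) ^ 2 = 0
    · exact ⟨0, 1, by norm_num, by nlinarith [sq_nonneg (v ⬝ᵥ e), sq_nonneg (v ⬝ᵥ u)]⟩
    · have ht := Real.sq_sqrt (add_nonneg (sq_nonneg (v ⬝ᵥ e)) (sq_nonneg (v ⬝ᵥ u)))
      have ht0 : √((v ⬝ᵥ e) ^ 2 + (v ⬝ᵥ u) ^ 2) ≠ 0 := by positivity
      refine ⟨v ⬝ᵥ u / √((v ⬝ᵥ e) ^ 2 + (v ⬝ᵥ u) ^ 2),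
        -(v ⬝ᵥ e) / √((v ⬝ᵥ e) ^ 2 + (v ⬝ᵥ u) ^ 2), ?_, ?_⟩
      · field_simp
        linarith
      · field_simp
        ring
  have hz : vecNorm (a • e + b • u) = 1 := by
    rw [← sq_eq_sq₀ (vecNorm_nonneg _) zero_le_one, vecNorm_sq_smul_add_smul heu, he, hu]
    linarith
  have hAz : vecNorm (A *ᵥ u) ^ 2 ≤ vecNorm (A *ᵥ (a • e + b • u)) ^ 2 := by
    rw [mulVec_add, mulVec_smul, mulVec_smul, vecNorm_sq_smul_add_smul hAeu]
    nlinarith [pow_le_pow_left₀ (vecNorm_nonneg _) hle 2, sq_nonneg a]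
  refine ((sq_le_sq₀ (vecNorm_nonneg _) (vecNorm_nonneg _)).1 hAz).trans ?_
  exact le_csSup (sigma2_set_bddAbove A v) ⟨_, hz.le, hv, rfl⟩

end SpectralGap

section AllOnes

variable {β : Type*} [Fintype β]

lemma vecNorm_const (c : ℝ) : vecNorm (fun _ : β => c) = |c| * √(Fintype.card β) := by
  rw [vecNorm, Finset.sum_const, Finset.card_univ, nsmul_eq_mul, Real.sqrt_mul' _ (sq_nonneg c),
    Real.sqrt_sq_eq_abs, mul_comm]

lemma const_dotProduct (c : ℝ) (x : β → ℝ) : (fun _ => c) ⬝ᵥ x = c * ∑ i, x i := by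
  simp only [dotProduct, Finset.mul_sum]

lemma vecNorm_mulVec_le_sigma2_mul_of_sum_eq_zero [Nonempty β] {G : Matrix β β ℝ} {d : ℝ}
    (hspec : specNorm G = d) (hright : G *ᵥ (fun _ => 1) = fun _ => d)
    (hleft : (fun _ => 1) ᵥ* G = fun _ => d) {x : β → ℝ} (hx : ∑ i, x i = 0) :
    vecNorm (G *ᵥ x) ≤ sigma2 G * vecNorm x := by
  rcases (vecNorm_nonneg x).eq_or_lt with hx0 | hxpos
  · simpa [← hx0] using vecNorm_mulVec_le_specNorm G x
  have hN : 0 < √(Fintype.card β) := Real.sqrt_pos.2 (by exact_mod_cast Fintype.card_pos)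
  set e : β → ℝ := (√(Fintype.card β))⁻¹ • fun _ => 1
  set u : β → ℝ := (vecNorm x)⁻¹ • x
  have he : vecNorm e = 1 := by
    rw [vecNorm_smul, vecNorm_const, abs_of_pos (inv_pos.2 hN), abs_one, one_mul,
      inv_mul_cancel₀ hN.ne']
  have hu : vecNorm u = 1 := by
    rw [vecNorm_smul, abs_of_pos (inv_pos.2 hxpos), inv_mul_cancel₀ hxpos.ne']
  have hsum_u : ∑ i, u i = 0 := by
    simp only [u, Pi.smul_apply, smul_eq_mul, ← Finset.mul_sum, hx, mul_zero]
  have hGe : G *ᵥ e = fun _ => (√(Fintype.card β))⁻¹ * d := by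
    rw [mulVec_smul, hright]
    rfl
  have heu : e ⬝ᵥ u = 0 := by
    rw [smul_dotProduct, const_dotProduct, hsum_u, mul_zero, smul_zero]
  have hGeu : (G *ᵥ e) ⬝ᵥ (G *ᵥ u) = 0 := by
    rw [hGe, const_dotProduct, ← one_mul (∑ i, _), ← const_dotProduct, dotProduct_mulVec,
      hleft, const_dotProduct, hsum_u]
    ring
  have hle : vecNorm (G *ᵥ u) ≤ vecNorm (G *ᵥ e) := by
    rw [hGe, vecNorm_const, abs_mul, abs_of_pos (inv_pos.2 hN), mul_right_comm,
      inv_mul_cancel₀ hN.ne', one_mul]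
    calc vecNorm (G *ᵥ u) ≤ specNorm G * vecNorm u := vecNorm_mulVec_le_specNorm G u
      _ ≤ |d| := by rw [hu, mul_one, hspec]; exact le_abs_self d
  have hGu := vecNorm_mulVec_le_sigma2 G he hu heu hGeu hle
  calc vecNorm (G *ᵥ x) = vecNorm x * vecNorm (G *ᵥ u) := by
        rw [mulVec_smul, vecNorm_smul, abs_of_pos (inv_pos.2 hxpos),
          mul_inv_cancel_left₀ hxpos.ne']
    _ ≤ sigma2 G * vecNorm x := by rw [mul_comm]; exact mul_le_mul_of_nonneg_right hGu hxpos.le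

lemma vecNorm_vecMul_le_of_sum_eq_zero {G : Matrix β β ℝ} {d s : ℝ} (hs : 0 ≤ s)
    (hright : G *ᵥ (fun _ => 1) = fun _ => d)
    (hgap : ∀ y : β → ℝ, ∑ i, y i = 0 → vecNorm (G *ᵥ y) ≤ s * vecNorm y)
    {x : β → ℝ} (hx : ∑ i, x i = 0) : vecNorm (x ᵥ* G) ≤ s * vecNorm x := by
  set y := x ᵥ* G
  have hy : ∑ i, y i = 0 := by
    have := dotProduct_mulVec x G fun _ => 1
    rw [hright, dotProduct_comm, const_dotProduct, hx, mul_zero, dotProduct_comm,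
      const_dotProduct, one_mul] at this
    exact this.symm
  have hsq : vecNorm y * vecNorm y ≤ s * vecNorm x * vecNorm y :=
    calc vecNorm y * vecNorm y = x ⬝ᵥ (G *ᵥ y) := by
          rw [← sq, vecNorm_sq_eq_dotProduct, dotProduct_mulVec]
      _ ≤ vecNorm x * vecNorm (G *ᵥ y) := dotProduct_le_vecNorm_mul _ _
      _ ≤ vecNorm x * (s * vecNorm y) :=
          mul_le_mul_of_nonneg_left (hgap y hy) (vecNorm_nonneg x)
      _ = s * vecNorm x * vecNorm y := by ring
  rcases (vecNorm_nonneg y).eq_or_lt with hy0 | hypos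
  · rw [← hy0]
    exact mul_nonneg hs (vecNorm_nonneg x)
  · exact le_of_mul_le_mul_right hsq hypos

end AllOnes

section Hadamard

variable {m p k l : Type*} [Fintype m] [Fintype l]

lemma transpose_mul_hadamard_mul_transpose_apply (U : Matrix m k ℝ) (G : Matrix m p ℝ)
    (Y : Matrix m l ℝ) (V : Matrix p l ℝ) (a : k) (j : p) :
    (Uᵀ * (G ⊙ (Y * Vᵀ))) a j = ∑ b, ((fun i => Y i b * U i a) ᵥ* G) j * V j b := by
  simp only [mul_apply, hadamard_apply, transpose_apply, vecMul, dotProduct, Finset.mul_sum,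
    Finset.sum_mul]
  rw [Finset.sum_comm]
  exact Finset.sum_congr rfl fun _ _ => Finset.sum_congr rfl fun _ _ => by ring

variable [Fintype k]

lemma sum_sq_vecNorm_mul_le {U : Matrix m k ℝ} {a : ℝ} (hU : ∀ i, ∑ c, U i c ^ 2 ≤ a)
    (Y : Matrix m l ℝ) :
    ∑ b, ∑ c, vecNorm (fun i => Y i b * U i c) ^ 2 ≤ a * frobNorm Y ^ 2 := by
  calc ∑ b, ∑ c, vecNorm (fun i => Y i b * U i c) ^ 2
      = ∑ i, (∑ b, Y i b ^ 2) * ∑ c, U i c ^ 2 := by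
        simp only [vecNorm_sq, mul_pow, Finset.sum_mul_sum]
        exact Finset.sum_comm_cycle
    _ ≤ ∑ i, (∑ b, Y i b ^ 2) * a :=
        Finset.sum_le_sum fun i _ => mul_le_mul_of_nonneg_left (hU i) (by positivity)
    _ = a * frobNorm Y ^ 2 := by rw [frobNorm_sq, ← Finset.sum_mul, mul_comm]

lemma transpose_mul_hadamard_mul_sub [DecidableEq k] (c : ℝ) (U : Matrix m k ℝ)
    (G : Matrix m p ℝ) (A : Matrix k p ℝ) :
    Uᵀ * (c • (G ⊙ (U * A))) - A =
      (of fun j => (c • ∑ i, G i j • vecMulVec (U i) (U i) - 1) *ᵥ Aᵀ j)ᵀ := by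
  ext a j
  simp only [Matrix.sub_apply, mul_apply, transpose_apply, Matrix.smul_apply, hadamard_apply,
    of_apply, mulVec, dotProduct, Matrix.sum_apply, vecMulVec_apply, one_apply, smul_eq_mul,
    sub_mul, Finset.sum_sub_distrib, ite_mul, one_mul, zero_mul, Finset.sum_ite_eq,
    Finset.mem_univ, if_true, Finset.mul_sum, Finset.sum_mul]
  congr 1
  rw [Finset.sum_comm]
  exact Finset.sum_congr rfl fun _ _ => Finset.sum_congr rfl fun _ _ => by ring

variable [Fintype p]

lemma frobNorm_transpose_mul_hadamard_mul_sub_le [DecidableEq k] {U : Matrix m k ℝ}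
    {G : Matrix m p ℝ} {c δ : ℝ}
    (hδ : ∀ j, specNorm (c • ∑ i, G i j • vecMulVec (U i) (U i) - 1) ≤ δ) (A : Matrix k p ℝ) :
    frobNorm (Uᵀ * (c • (G ⊙ (U * A))) - A) ≤ |δ| * frobNorm A := by
  refine (sq_le_sq₀ (frobNorm_nonneg _) (by positivity [frobNorm_nonneg A])).1 ?_
  rw [transpose_mul_hadamard_mul_sub, frobNorm_transpose, mul_pow, sq_abs,
    ← frobNorm_transpose A]
  refine frobNorm_sq_le_of_vecNorm_le fun j => ?_
  exact (vecNorm_mulVec_le_specNorm _ _).trans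
    (mul_le_mul_of_nonneg_right (hδ j) (vecNorm_nonneg _))

lemma frobNorm_sq_transpose_mul_hadamard_le {U : Matrix m k ℝ} {V : Matrix p l ℝ}
    {G : Matrix m p ℝ} {Y : Matrix m l ℝ} {a s : ℝ} (ha : 0 ≤ a)
    (hU : ∀ i, ∑ c, U i c ^ 2 ≤ a) (hV : ∀ j, ∑ b, V j b ^ 2 ≤ a)
    (hgap : ∀ x : m → ℝ, ∑ i, x i = 0 → vecNorm (x ᵥ* G) ≤ s * vecNorm x)
    (hUY : Uᵀ * Y = 0) :
    frobNorm (Uᵀ * (G ⊙ (Y * Vᵀ))) ^ 2 ≤ (a * s) ^ 2 * frobNorm Y ^ 2 := by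
  have hsum : ∀ b c, ∑ i, Y i b * U i c = 0 := fun b c => by
    simpa [mul_apply, mul_comm] using congrFun (congrFun hUY c) b
  have hgap_sq : ∀ b c, vecNorm ((fun i => Y i b * U i c) ᵥ* G) ^ 2
      ≤ s ^ 2 * vecNorm (fun i => Y i b * U i c) ^ 2 := fun b c => by
    rw [← mul_pow]
    exact pow_le_pow_left₀ (vecNorm_nonneg _) (hgap _ (hsum b c)) 2
  calc frobNorm (Uᵀ * (G ⊙ (Y * Vᵀ))) ^ 2
      = ∑ c, ∑ j, (∑ b, ((fun i => Y i b * U i c) ᵥ* G) j * V j b) ^ 2 := by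
        simp only [frobNorm_sq, transpose_mul_hadamard_mul_transpose_apply]
    _ ≤ ∑ c, ∑ j, (∑ b, ((fun i => Y i b * U i c) ᵥ* G) j ^ 2) * a := by
        gcongr with c _ j _
        exact (Finset.sum_mul_sq_le_sq_mul_sq _ _ _).trans
          (mul_le_mul_of_nonneg_left (hV j) (by positivity))
    _ = (∑ b, ∑ c, vecNorm ((fun i => Y i b * U i c) ᵥ* G) ^ 2) * a := by
        simp only [vecNorm_sq, Finset.sum_mul]
        exact Finset.sum_comm_cycle
    _ ≤ (∑ b, ∑ c, s ^ 2 * vecNorm (fun i => Y i b * U i c) ^ 2) * a := by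
        gcongr with b _ c _
        exact hgap_sq b c
    _ ≤ s ^ 2 * (a * frobNorm Y ^ 2) * a := by
        simp only [← Finset.mul_sum]
        gcongr
        exact sum_sq_vecNorm_mul_le hU Y
    _ = (a * s) ^ 2 * frobNorm Y ^ 2 := by ring

end Hadamard

section SamplingError

variable {n r : ℕ} {U V : Matrix (Fin n) (Fin r) ℝ}

lemma frobNorm_sq_transpose_mul_sampling_error_le (hU : Uᵀ * U = 1) (hV : Vᵀ * V = 1)
    {Z : Matrix (Fin n) (Fin n) ℝ} (hZ : projT U V Z = Z) {G : Matrix (Fin n) (Fin n) ℝ}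
    {c δ a s : ℝ} (hc : 0 ≤ c) (ha : 0 ≤ a)
    (hδ : ∀ j, specNorm (c • ∑ i, G i j • vecMulVec (U i) (U i) - 1) ≤ δ)
    (hUa : ∀ i, ∑ b, U i b ^ 2 ≤ a) (hVa : ∀ j, ∑ b, V j b ^ 2 ≤ a)
    (hgap : ∀ x : Fin n → ℝ, ∑ i, x i = 0 → vecNorm (x ᵥ* G) ≤ s * vecNorm x) :
    frobNorm (Uᵀ * (c • (G ⊙ Z) - Z)) ^ 2 ≤
      (δ ^ 2 + (c * (a * s)) ^ 2) * frobNorm Z ^ 2 := by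
  set A := Uᵀ * Z
  set B := Z - U * A
  have hBV : B = B * V * Vᵀ := by
    have h : B - B * V * Vᵀ = Z - projT U V Z := by
      simp only [B, A, projT, Matrix.sub_mul, Matrix.mul_assoc]
      abel
    rwa [hZ, sub_self, sub_eq_zero] at h
  have hsplit : Uᵀ * (c • (G ⊙ Z) - Z) =
      (Uᵀ * (c • (G ⊙ (U * A))) - A) + c • (Uᵀ * (G ⊙ (B * V * Vᵀ))) := by
    rw [← hBV]
    conv_lhs => rw [← add_sub_cancel (U * A) Z]
    simp only [hadamard_add, smul_add, Matrix.mul_add, Matrix.mul_smul, Matrix.mul_sub, A]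
    abel
  have hX : frobNorm (c • (Uᵀ * (G ⊙ (B * V * Vᵀ)))) ≤ c * (a * |s|) * frobNorm B := by
    rw [frobNorm_smul, abs_of_nonneg hc, mul_assoc]
    refine mul_le_mul_of_nonneg_left ?_ hc
    refine (sq_le_sq₀ (frobNorm_nonneg _) (by positivity [frobNorm_nonneg B])).1 ?_
    have hBnorm : frobNorm B = frobNorm (B * V) := by
      conv_lhs => rw [hBV]
      exact frobNorm_mul_transpose_of_orthonormal hV _
    have hUBV : Uᵀ * (B * V) = 0 := by
      rw [← Matrix.mul_assoc, transpose_mul_sub_mul_transpose_mul_eq_zero hU, Matrix.zero_mul]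
    calc _ ≤ (a * s) ^ 2 * frobNorm (B * V) ^ 2 :=
          frobNorm_sq_transpose_mul_hadamard_le ha hUa hVa hgap hUBV
      _ = (a * |s| * frobNorm B) ^ 2 := by
          rw [hBnorm, mul_pow, mul_pow, mul_pow, sq_abs]
  have hZAB : frobNorm Z ^ 2 = frobNorm A ^ 2 + frobNorm B ^ 2 :=
    frobNorm_sq_eq_add_of_orthonormal hU Z
  have htri := (frobNorm_add_le _ _).trans
    (add_le_add (frobNorm_transpose_mul_hadamard_mul_sub_le hδ A) hX)
  rw [← hsplit] at htri
  rw [hZAB]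
  calc _ ≤ (|δ| * frobNorm A + c * (a * |s|) * frobNorm B) ^ 2 :=
        pow_le_pow_left₀ (frobNorm_nonneg _) htri 2
    _ ≤ (δ ^ 2 + (c * (a * s)) ^ 2) * (frobNorm A ^ 2 + frobNorm B ^ 2) := by
        have hs2 : (c * (a * |s|)) ^ 2 = (c * (a * s)) ^ 2 := by
          rw [mul_pow, mul_pow, mul_pow, mul_pow, sq_abs]
        nlinarith [sq_nonneg (|δ| * frobNorm B - c * (a * |s|) * frobNorm A), sq_abs δ]

end SamplingError

section Sampling

variable {n : ℕ} {Ω : Finset (Fin n × Fin n)}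

lemma sampl_eq_hadamard (Z : Matrix (Fin n) (Fin n) ℝ) : sampl Ω Z = biadj Ω ⊙ Z := by
  ext i j
  simp only [sampl, biadj, of_apply, hadamard_apply, ite_mul, one_mul, zero_mul]

lemma StrongIncoherence.specNorm_sum_ite_smul_le {r d : ℕ} {U : Matrix (Fin n) (Fin r) ℝ}
    {δ : ℝ} (h : StrongIncoherence U d δ) {p : Fin n → Prop} [DecidablePred p]
    (hp : (Finset.univ.filter p).card = d) :
    specNorm (((n : ℝ) / d) • ∑ i, (if p i then (1 : ℝ) else 0) • vecMulVec (U i) (U i) -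
      1) ≤ δ := by
  simpa only [ite_smul, one_smul, zero_smul, ← Finset.sum_filter] using h _ hp

lemma AssumptionG2.vecNorm_mulVec_le [Nonempty (Fin n)] {d : ℕ} {C : ℝ}
    (hG2 : AssumptionG2 Ω d C) (hG1 : AssumptionG1 Ω d) {x : Fin n → ℝ} (hx : ∑ i, x i = 0) :
    vecNorm (biadj Ω *ᵥ x) ≤ C * √d * vecNorm x :=
  (vecNorm_mulVec_le_sigma2_mul_of_sum_eq_zero hG1.1 hG1.2.1 hG1.2.2 hx).trans
    (mul_le_mul_of_nonneg_right hG2 (vecNorm_nonneg x))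

end Sampling

theorem stmt_7_general {n d r : ℕ} (hn : 0 < n) {C μ₀ δ : ℝ} (hC : 0 < C)
    (M : Matrix (Fin n) (Fin n) ℝ) (U V : Matrix (Fin n) (Fin r) ℝ) (s : Fin r → ℝ)
    (hSVD : IsThinSVD M U s V)
    (hA1U : IncoherentRows U μ₀) (hA1V : IncoherentRows V μ₀)
    (hA2U : StrongIncoherence U d δ) (hA2V : StrongIncoherence V d δ)
    (Ω : Finset (Fin n × Fin n)) (hreg : RegularSampling Ω d)
    (hG1 : AssumptionG1 Ω d) (hG2 : AssumptionG2 Ω d C) :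
    ∀ Z : Matrix (Fin n) (Fin n) ℝ, projT U V Z = Z →
      frobNorm (((n : ℝ) / (d : ℝ)) • projT U V (sampl Ω Z) - Z) ≤
        Real.sqrt (2 * (δ ^ 2 + C ^ 2 * μ₀ ^ 2 * r ^ 2 / d)) * frobNorm Z := by
  intro Z hZ
  obtain ⟨hU, hV, -, -⟩ := hSVD
  have : Nonempty (Fin n) := ⟨⟨0, hn⟩⟩
  have ha : 0 ≤ μ₀ * r / n :=
    (Finset.sum_nonneg fun k _ => sq_nonneg (U ⟨0, hn⟩ k)).trans (hA1U _)
  have hgap (x : Fin n → ℝ) (hx : ∑ i, x i = 0) := hG2.vecNorm_mulVec_le hG1 hx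
  have hconst :
      ((n : ℝ) / d * (μ₀ * r / n * (C * √d))) ^ 2 = C ^ 2 * μ₀ ^ 2 * r ^ 2 / d := by
    have : (n : ℝ) ≠ 0 := by positivity
    rw [mul_pow, mul_pow, mul_pow, Real.sq_sqrt d.cast_nonneg, div_pow, div_pow]
    field_simp
  have hUW := frobNorm_sq_transpose_mul_sampling_error_le (G := biadj Ω) hU hV hZ
    (by positivity) ha (fun j => hA2U.specNorm_sum_ite_smul_le (hreg.2 j)) hA1U hA1V
    fun x hx => vecNorm_vecMul_le_of_sum_eq_zero (by positivity) hG1.2.1 hgap hx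
  have hVW := frobNorm_sq_transpose_mul_sampling_error_le (G := (biadj Ω)ᵀ) hV hU
    (by rw [projT_transpose, hZ]) (by positivity) ha
    (fun j => hA2V.specNorm_sum_ite_smul_le (hreg.1 j)) hA1V hA1U
    fun x hx => by simpa only [vecMul_transpose] using hgap x hx
  rw [← transpose_hadamard, ← transpose_smul, ← transpose_sub, ← transpose_mul,
    frobNorm_transpose, frobNorm_transpose] at hVW
  rw [hconst] at hUW hVW
  have hT := frobNorm_sq_projT_le hU hV (((n : ℝ) / d) • (biadj Ω ⊙ Z) - Z)
  calc frobNorm (((n : ℝ) / d) • projT U V (sampl Ω Z) - Z)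
      = frobNorm (projT U V (((n : ℝ) / d) • (biadj Ω ⊙ Z) - Z)) := by
        rw [projT_smul_sub, hZ, sampl_eq_hadamard]
    _ ≤ √(2 * (δ ^ 2 + C ^ 2 * μ₀ ^ 2 * r ^ 2 / d) * frobNorm Z ^ 2) :=
        Real.le_sqrt_of_sq_le (by linarith)
    _ = _ := by rw [Real.sqrt_mul (by positivity), Real.sqrt_sq (frobNorm_nonneg Z)]

/-- Lemma 1: near-isometry of `(n/d)·P_T P_Ω` on the subspace `T`. -/
theorem stmt_7 {n d r : ℕ} (hn : 0 < n) (hd : 0 < d) (hr : 0 < r) {C μ₀ δ : ℝ} (hC : 0 < C)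
    (M : Matrix (Fin n) (Fin n) ℝ) (U V : Matrix (Fin n) (Fin r) ℝ) (s : Fin r → ℝ)
    (hSVD : IsThinSVD M U s V) (hrank : M.rank = r)
    (hA1U : IncoherentRows U μ₀) (hA1V : IncoherentRows V μ₀)
    (hA2U : StrongIncoherence U d δ) (hA2V : StrongIncoherence V d δ)
    (Ω : Finset (Fin n × Fin n)) (hreg : RegularSampling Ω d)
    (hG1 : AssumptionG1 Ω d) (hG2 : AssumptionG2 Ω d C) :
    ∀ Z : Matrix (Fin n) (Fin n) ℝ, projT U V Z = Z →
      frobNorm (((n : ℝ) / (d : ℝ)) • projT U V (sampl Ω Z) - Z) ≤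
        Real.sqrt (2 * (δ ^ 2 + C ^ 2 * μ₀ ^ 2 * r ^ 2 / d)) * frobNorm Z :=
  stmt_7_general hn hC M U V s hSVD hA1U hA1V hA2U hA2V Ω hreg hG1 hG2
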